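/- arXiv:1405.6509 — 2 statements merged into one kernel-verified Lean document; each statement's English description precedes it below -/
import Mathlib

section
/- Consider the argumentation framework with arguments {a, b, c} and defeats a→b, b→a, a→c, b→c. For any even number of agents n ≥ 2, there exists no aggregation operator F satisfying Universal Domain, Weak Systematicity, Anonymity, Collective Rationality, and Unanimity. -/
inductive Label : Type
  | inn | out | undec
  deriving DecidableEq

def Complete {A : Type} (att : A → A → Prop) (L : A → Label) : Prop :=
  (∀ a, L a = Label.inn → ∀ b, att b a → L b = Label.out) ∧
  (∀ a, L a = Label.out → ∃ b, att b a ∧ L b = Label.inn) ∧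
  (∀ a, L a = Label.undec →
    (∃ b, att b a ∧ L b = Label.undec) ∧ ¬ ∃ b, att b a ∧ L b = Label.inn)

/-- Number of agents labelling argument `a` with label `l` in profile `P`. -/
def count {A : Type} {n : ℕ} (P : Fin n → A → Label) (a : A) (l : Label) : ℕ :=
  (Finset.univ.filter fun i => P i a = l).card

/-- `l` is the strict plurality winner for argument `a` in profile `P`. -/
def IsPlu {A : Type} {n : ℕ} (P : Fin n → A → Label) (a : A) (l : Label) : Prop :=
  ∀ l', l' ≠ l → count P a l' < count P a l

/-- The argument-wise plurality rule is defined on `P` (no ties). -/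
def PluDefined {A : Type} {n : ℕ} (P : Fin n → A → Label) : Prop :=
  ∀ a, ∃ l, IsPlu P a l

def InSync {A : Type} (att : A → A → Prop) (a b : A) : Prop :=
  (∀ L, Complete att L → L a = L b) ∨
  (∀ L, Complete att L →
    ((L a = Label.inn ↔ L b = Label.out) ∧ (L a = Label.out ↔ L b = Label.inn)))

inductive Arg : Type
  | a | b | c
  deriving DecidableEq

instance : Fintype Arg := ⟨⟨{Arg.a, Arg.b, Arg.c}, by decide⟩, by intro x; cases x <;> decide⟩

/-- Defeats: a→b, b→a, a→c, b→c. -/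
def att7 : Arg → Arg → Prop := fun x y =>
  (x = Arg.a ∧ y = Arg.b) ∨ (x = Arg.b ∧ y = Arg.a) ∨
  (x = Arg.a ∧ y = Arg.c) ∨ (x = Arg.b ∧ y = Arg.c)

/-!
With `n = 2m` agents, let half of them accept `a` and the other half accept `b`. Swapping the two
halves is a permutation of the agents that exchanges the columns of `a` and `b`, so anonymity and
weak systematicity force the outcome to give `a` and `b` the same label; every agent rejects `c`, so
weak systematicity and unanimity force `c` out. But in a complete labelling of this framework two
mutual attackers with equal labels are both undecided, and then so is `c`.
-/

theorem Fin.comp_append {α β : Type*} {m n : ℕ} (f : α → β) (xs : Fin m → α) (ys : Fin n → α) :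
    f ∘ Fin.append xs ys = Fin.append (f ∘ xs) (f ∘ ys) := by
  funext i
  induction i using Fin.addCases <;> simp

theorem Fin.append_comp_finAddFlip {α : Type*} {m n : ℕ} (xs : Fin m → α) (ys : Fin n → α) :
    Fin.append xs ys ∘ finAddFlip = Fin.append ys xs := by
  funext i
  induction i using Fin.addCases <;> simp

theorem Fin.append_const_self {α : Type*} {m n : ℕ} (x : α) :
    Fin.append (fun _ : Fin m => x) (fun _ : Fin n => x) = fun _ => x := by
  funext i
  induction i using Fin.addCases <;> simp

section Aggregation

variable {A : Type} {att : A → A → Prop} {n : ℕ}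

def WeaklySystematic (F : (Fin n → {L : A → Label // Complete att L}) → A → Label) : Prop :=
  ∀ (P P' : Fin n → {L : A → Label // Complete att L}) (x y : A),
    (∀ i, (P i).1 x = (P' i).1 y) → F P x = F P' y

def Anonymous (F : (Fin n → {L : A → Label // Complete att L}) → A → Label) : Prop :=
  ∀ (P : Fin n → {L : A → Label // Complete att L}) (ρ : Equiv.Perm (Fin n)),
    F (fun i => P (ρ i)) = F P

theorem WeaklySystematic.apply_eq_apply_of_anonymous
    {F : (Fin n → {L : A → Label // Complete att L}) → A → Label}
    (hsys : WeaklySystematic F) (hanon : Anonymous F)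
    (P : Fin n → {L : A → Label // Complete att L}) (ρ : Equiv.Perm (Fin n)) {x y : A}
    (h : (fun i => (P (ρ i)).1 x) = fun i => (P i).1 y) : F P x = F P y :=
  calc F P x = F (fun i => P (ρ i)) x := by rw [hanon]
    _ = F P y := hsys _ _ x y (congrFun h)

end Aggregation

theorem Complete.att7_c_eq_undec {L : Arg → Label} (hL : Complete att7 L)
    (hab : L Arg.a = L Arg.b) : L Arg.c = Label.undec := by
  obtain ⟨hin, hout, -⟩ := hL
  cases ha : L Arg.a with
  | inn => simp [hin Arg.a ha Arg.b (by simp [att7]), ha] at hab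
  | out =>
    obtain ⟨x, hxa, hx⟩ := hout Arg.a ha
    obtain rfl : x = Arg.b := by simpa [att7] using hxa
    simp [← hab, ha] at hx
  | undec =>
    cases hc : L Arg.c with
    | inn => simp [hin Arg.c hc Arg.a (by simp [att7])] at ha
    | out =>
      obtain ⟨x, hxc, hx⟩ := hout Arg.c hc
      obtain rfl | rfl : x = Arg.a ∨ x = Arg.b := by simpa [att7] using hxc
      all_goals simp [← hab, ha] at hx
    | undec => rfl

instance : DecidableRel att7 := fun x y => by unfold att7; infer_instance

def inA : {L : Arg → Label // Complete att7 L} :=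
  ⟨fun x => if x = Arg.a then Label.inn else Label.out, by unfold Complete; decide⟩

def inB : {L : Arg → Label // Complete att7 L} :=
  ⟨fun x => if x = Arg.b then Label.inn else Label.out, by unfold Complete; decide⟩

theorem stmt7_general {n : ℕ} (hn : Even n) :
    ¬ ∃ F : (Fin n → {L : Arg → Label // Complete att7 L}) → Arg → Label,
      -- Weak Systematicity
      (∀ (P P' : Fin n → {L : Arg → Label // Complete att7 L}) (x y : Arg),
        (∀ i, (P i).1 x = (P' i).1 y) → F P x = F P' y) ∧
      -- Anonymity
      (∀ (P : Fin n → {L : Arg → Label // Complete att7 L}) (ρ : Equiv.Perm (Fin n)),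
        F (fun i => P (ρ i)) = F P) ∧
      -- Collective Rationality
      (∀ P : Fin n → {L : Arg → Label // Complete att7 L}, Complete att7 (F P)) ∧
      -- Unanimity
      (∀ L : {L : Arg → Label // Complete att7 L}, F (fun _ => L) = L.1) := by
  rintro ⟨F, hsys, hanon, hrat, hunan⟩
  obtain ⟨m, rfl⟩ := hn
  set P := Fin.append (fun _ : Fin m => inA) (fun _ : Fin m => inB)
  have hab : F P Arg.a = F P Arg.b := by
    refine WeaklySystematic.apply_eq_apply_of_anonymous hsys hanon P finAddFlip ?_
    change (fun L => L.1 Arg.a) ∘ P ∘ finAddFlip = (fun L => L.1 Arg.b) ∘ P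
    simp only [P, Fin.append_comp_finAddFlip, Fin.comp_append]
    rfl
  have hc : F P Arg.c = Label.out := by
    refine (hsys P (fun _ => inA) _ _ (congrFun ?_)).trans (congrFun (hunan inA) Arg.c)
    change (fun L => L.1 Arg.c) ∘ P = fun _ => inA.1 Arg.c
    simp only [P, Fin.comp_append]
    exact Fin.append_const_self _
  simp [(hrat P).att7_c_eq_undec hab] at hc

/-- for the framework {a,b,c} with a↔b and a,b→c and any even n ≥ 2,
no aggregation operator satisfies Universal Domain, Weak Systematicity, Anonymity,
Collective Rationality, and Unanimity. -/
theorem stmt7 {n : ℕ} (hn : Even n) (hn2 : 2 ≤ n) :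
    ¬ ∃ F : (Fin n → {L : Arg → Label // Complete att7 L}) → Arg → Label,
      -- Weak Systematicity
      (∀ (P P' : Fin n → {L : Arg → Label // Complete att7 L}) (x y : Arg),
        (∀ i, (P i).1 x = (P' i).1 y) → F P x = F P' y) ∧
      -- Anonymity
      (∀ (P : Fin n → {L : Arg → Label // Complete att7 L}) (ρ : Equiv.Perm (Fin n)),
        F (fun i => P (ρ i)) = F P) ∧
      -- Collective Rationality
      (∀ P : Fin n → {L : Arg → Label // Complete att7 L}, Complete att7 (F P)) ∧
      -- Unanimity
      (∀ L : {L : Arg → Label // Complete att7 L}, F (fun _ => L) = L.1) :=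
  stmt7_general hn
end

section
/- Let AF = (A, →) be an argumentation framework that is partitioned into disconnected components each of which forms an issue (an equivalence class of the in-sync relation). Then the argument-wise plurality rule produces a complete labelling on every profile of complete labellings for which it is defined (Collective Rationality). -/
namespace Label

def flip : Label → Label
  | inn => out
  | out => inn
  | undec => undec

theorem flip_involutive : Function.Involutive flip := by
  intro l; cases l <;> rfl

end Label

section Plurality

variable {A : Type} {n : ℕ} {P : Fin n → A → Label} {a b : A} {l : Label}

theorem count_comp {f : Label → Label} (hf : f.Injective) (h : ∀ i, P i b = f (P i a))
    (l : Label) : count P b (f l) = count P a l := by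
  unfold count
  simp_rw [h, hf.eq_iff]

theorem IsPlu.comp {f : Label → Label} (hf : f.Involutive) (h : ∀ i, P i b = f (P i a))
    (hl : IsPlu P a l) : IsPlu P b (f l) := by
  intro l' hne
  have hne' : f l' ≠ l := fun he => hne (by rw [← he, hf])
  calc count P b l' = count P b (f (f l')) := by rw [hf]
    _ = count P a (f l') := count_comp hf.injective h _
    _ < count P a l := hl _ hne'
    _ = count P b (f l) := (count_comp hf.injective h _).symm

theorem IsPlu.unique {l' : Label} (h : IsPlu P a l) (h' : IsPlu P a l') : l = l' := by
  by_contra hne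
  exact (h l' (Ne.symm hne)).asymm (h' l hne)

theorem IsPlu.exists_vote (h : IsPlu P a l) : ∃ i, P i a = l := by
  obtain ⟨l', hl'⟩ : ∃ l', l' ≠ l := by
    cases l
    exacts [⟨.out, by decide⟩, ⟨.inn, by decide⟩, ⟨.inn, by decide⟩]
  obtain ⟨i, hi⟩ := Finset.card_pos.mp (Nat.zero_lt_of_lt (h l' hl'))
  exact ⟨i, (Finset.mem_filter.mp hi).2⟩

end Plurality

theorem InSync.eq_or_eq_flip {A : Type} {att : A → A → Prop} {a b : A} (h : InSync att a b) :
    (∀ L, Complete att L → L b = L a) ∨ (∀ L, Complete att L → L b = (L a).flip) := by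
  refine h.imp (fun h L hL => (h L hL).symm) (fun h L hL => ?_)
  obtain ⟨h₁, h₂⟩ := h L hL
  cases ha : L a <;> cases hb : L b <;> simp_all [Label.flip]

theorem IsPlu.eq_or_eq_flip_of_inSync {A : Type} {n : ℕ} {att : A → A → Prop}
    {P : Fin n → A → Label} (hcomp : ∀ i, Complete att (P i)) {Lstar : A → Label}
    (hLstar : ∀ a, IsPlu P a (Lstar a)) {a b : A} (hab : InSync att a b) :
    (Lstar b = Lstar a ∧ ∀ i, P i b = P i a) ∨
      (Lstar b = (Lstar a).flip ∧ ∀ i, P i b = (P i a).flip) := by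
  rcases hab.eq_or_eq_flip with h | h
  · have hP : ∀ i, P i b = id (P i a) := fun i => h _ (hcomp i)
    exact .inl ⟨(hLstar b).unique ((hLstar a).comp (fun _ => rfl) hP), hP⟩
  · have hP : ∀ i, P i b = (P i a).flip := fun i => h _ (hcomp i)
    exact .inr ⟨(hLstar b).unique ((hLstar a).comp Label.flip_involutive hP), hP⟩

theorem stmt15_general {A : Type} {n : ℕ} (att : A → A → Prop)
    (hissues : ∀ a b, att b a → InSync att a b)
    (P : Fin n → A → Label) (hcomp : ∀ i, Complete att (P i))
    (Lstar : A → Label) (hLstar : ∀ a, IsPlu P a (Lstar a)) :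
    Complete att Lstar := by
  have hdefeater := fun a b hab =>
    IsPlu.eq_or_eq_flip_of_inSync hcomp hLstar (hissues a b hab)
  refine ⟨fun a ha b hab => ?_, fun a ha => ?_, fun a ha => ?_⟩
  · obtain ⟨i, hi⟩ := (hLstar a).exists_vote
    have hbi := (hcomp i).1 a (hi.trans ha) b hab
    rcases hdefeater a b hab with ⟨-, hP⟩ | ⟨hb, -⟩
    · simp [hP, hi, ha] at hbi
    · rw [hb, ha]; rfl
  · obtain ⟨i, hi⟩ := (hLstar a).exists_vote
    obtain ⟨b, hab, hbi⟩ := (hcomp i).2.1 a (hi.trans ha)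
    refine ⟨b, hab, ?_⟩
    rcases hdefeater a b hab with ⟨-, hP⟩ | ⟨hb, -⟩
    · simp [hP, hi, ha] at hbi
    · rw [hb, ha]; rfl
  · have hundec : ∀ b, att b a → Lstar b = Label.undec := fun b hab => by
      rcases hdefeater a b hab with ⟨hb, -⟩ | ⟨hb, -⟩ <;> simp [hb, ha, Label.flip]
    obtain ⟨i, hi⟩ := (hLstar a).exists_vote
    obtain ⟨⟨b, hab, -⟩, -⟩ := (hcomp i).2.2 a (hi.trans ha)
    exact ⟨⟨b, hab, hundec b hab⟩, fun ⟨b, hab, hb⟩ => by simp [hundec b hab] at hb⟩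

/-- if the framework consists of disconnected components each forming an
issue (so every defeater of an argument is in-sync with it), the argument-wise
plurality rule produces a complete labelling on every profile of complete labellings
for which it is defined. -/
theorem stmt15 {A : Type} [Fintype A] {n : ℕ} (att : A → A → Prop)
    (hissues : ∀ a b, att b a → InSync att a b)
    (P : Fin n → A → Label) (hcomp : ∀ i, Complete att (P i))
    (hdef : PluDefined P)
    (Lstar : A → Label) (hLstar : ∀ a, IsPlu P a (Lstar a)) :
    Complete att Lstar :=
  stmt15_general att hissues P hcomp Lstar hLstar
end
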